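/- Under the communication setup, the backward controller recursion with horizon M, and the distributed controller with virtual dynamics initialized at x_{0,i} = x_0/N, the auxiliary cost Ĵ_M := Σ_{i=1}^N ( Σ_{k=0}^M x_{k,i}^T (N Q_k) x_{k,i} + Σ_{k=0}^{M−1} u_{k,i}^T R_{k,i} u_{k,i} ) satisfies Ĵ_M ≤ Σ_{i=1}^N x_{0,i}^T P̆_{0,i} x_{0,i} = (1/N^2) Σ_{i=1}^N x_0^T P̆_{0,i} x_0. -/

import Mathlib

/-!
Fix a step `k` and put `v_j = P_{k+1,j} A_k x_{k,j}` and `w_i = Σ_{j ∈ 𝒩̄_i} ω_ji v_j`, so that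
agent `i` starts the step from `z_i = P̄_{k+1,i}⁻¹ w_i`. Completing the square with the gain
`K_{k,i}` and the Woodbury identity give, for each agent,
`u_{k,i}ᵀ R_{k,i} u_{k,i} + x_{k+1,i}ᵀ P̆_{k+1,i} x_{k+1,i} = w_iᵀ P̄_{k+1,i}⁻¹ w_i`.
Since `ω_ji ≤ 1/d_i^out`, the weights received by agent `i` sum to at most one, so convexity of a
positive semidefinite quadratic form bounds this by `Σ_j ω_ji v_jᵀ P̄_{k+1,i}⁻¹ v_j`. Summing over
`i` and exchanging the sums turns `Σ_i ω_ji P̄_{k+1,i}⁻¹` into `P_{k+1,j}⁻¹`, and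
`v_jᵀ P_{k+1,j}⁻¹ v_j = x_{k,j}ᵀ (P̆_{k,j} − N Q_k) x_{k,j}`. So the total cost-to-go
`Σ_i x_{k,i}ᵀ P̆_{k,i} x_{k,i}` decreases by at least the stage cost at every step, and the bound
telescopes. All the inverses are legitimate because positive definiteness propagates backwards
from `P̆_{M,i} = N Q_M`.
-/

open Matrix Finset

theorem Finset.sum_le_one_of_le_one_div_card {α : Type*} {s : Finset α} {c : α → ℝ}
    (h : ∀ j ∈ s, c j ≤ 1 / #s) : ∑ j ∈ s, c j ≤ 1 := by
  refine (sum_le_card_nsmul s c _ h).trans ?_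
  rw [nsmul_eq_mul, mul_one_div]
  exact div_self_le_one _

theorem Finset.sum_range_add_le_of_add_le {G : Type*} [AddCommGroup G] [PartialOrder G]
    [IsOrderedAddMonoid G] {a V : ℕ → G} {M : ℕ} (h : ∀ k < M, a k + V (k + 1) ≤ V k) :
    ∑ k ∈ range M, a k + V M ≤ V 0 := by
  have hsum := sum_le_sum fun k hk => le_sub_iff_add_le.mpr (h k (mem_range.mp hk))
  rw [sum_range_sub'] at hsum
  exact le_sub_iff_add_le.mp hsum

namespace Matrix

variable {n m : Type*} [Fintype n] [Fintype m]

theorem dotProduct_mulVec_transpose_mul_mul (C : Matrix m n ℝ) (M : Matrix m m ℝ) (x : n → ℝ) :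
    x ⬝ᵥ ((Cᵀ * M * C) *ᵥ x) = (C *ᵥ x) ⬝ᵥ (M *ᵥ (C *ᵥ x)) := by
  rw [← mulVec_mulVec, ← mulVec_mulVec, dotProduct_mulVec, vecMul_transpose]

theorem PosSemidef.convexOn_dotProduct_mulVec {M : Matrix n n ℝ} (hM : M.PosSemidef) :
    ConvexOn ℝ Set.univ fun x : n → ℝ => x ⬝ᵥ (M *ᵥ x) := by
  refine ⟨convex_univ, fun x _ y _ a b ha hb hab => ?_⟩
  -- with `q x = x ⬝ᵥ (M *ᵥ x)`: `a q x + b q y - q (a x + b y) = a b q (x - y)` when `a + b = 1`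
  have hxy := hM.dotProduct_mulVec_nonneg (x - y)
  simp only [star_trivial, mulVec_sub, sub_dotProduct, dotProduct_sub] at hxy
  simp only [smul_eq_mul, mulVec_add, mulVec_smul, add_dotProduct, dotProduct_add,
    smul_dotProduct, dotProduct_smul]
  obtain rfl : b = 1 - a := by linarith
  nlinarith [mul_nonneg ha hb]

theorem PosSemidef.dotProduct_mulVec_sum_smul_le {M : Matrix n n ℝ} (hM : M.PosSemidef)
    {ι : Type*} {s : Finset ι} {c : ι → ℝ} (hc₀ : ∀ j ∈ s, 0 ≤ c j) (hc₁ : ∑ j ∈ s, c j ≤ 1)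
    (v : ι → n → ℝ) :
    (∑ j ∈ s, c j • v j) ⬝ᵥ (M *ᵥ ∑ j ∈ s, c j • v j) ≤ ∑ j ∈ s, c j * (v j ⬝ᵥ (M *ᵥ v j)) := by
  simpa using hM.convexOn_dotProduct_mulVec.map_add_sum_le hc₀ (v := 1 - ∑ j ∈ s, c j) (q := 0)
    (by ring) (fun _ _ => trivial) (by linarith) trivial

variable [DecidableEq n] [DecidableEq m]

theorem PosDef.inv_add_mul_inv_mul_transpose_inv {P : Matrix n n ℝ} {R : Matrix m m ℝ}
    (hP : P.PosDef) (hR : R.PosDef) (B : Matrix n m ℝ) : (P⁻¹ + B * R⁻¹ * Bᵀ)⁻¹.PosDef :=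
  (hP.inv.add_posSemidef (by simpa using hR.inv.posSemidef.mul_mul_conjTranspose_same B)).inv

end Matrix

section LQR

variable {n m : Type*} [Fintype n] [Fintype m] [DecidableEq n] [DecidableEq m]

noncomputable def lqrGain (R : Matrix m m ℝ) (B : Matrix n m ℝ) (P : Matrix n n ℝ) :
    Matrix m n ℝ :=
  -((R + Bᵀ * P * B)⁻¹ * (Bᵀ * P))

theorem lqrGain_riccati {P : Matrix n n ℝ} {R : Matrix m m ℝ} (hP : P.PosDef) (hR : R.PosDef)
    (B : Matrix n m ℝ) :
    (lqrGain R B P)ᵀ * R * lqrGain R B P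
      + (1 + B * lqrGain R B P)ᵀ * P * (1 + B * lqrGain R B P) = (P⁻¹ + B * R⁻¹ * Bᵀ)⁻¹ := by
  set K := lqrGain R B P with hK
  have hPu := hP.det_pos.ne'.isUnit
  have hRu := hR.det_pos.ne'.isUnit
  have hS : (R + Bᵀ * P * B).PosDef :=
    hR.add_posSemidef (by simpa using hP.posSemidef.conjTranspose_mul_mul_same B)
  have hSK : (R + Bᵀ * P * B) * K = -(Bᵀ * P) := by
    rw [hK, lqrGain, Matrix.mul_neg, ← Matrix.mul_assoc, mul_nonsing_inv _ hS.det_pos.ne'.isUnit,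
      Matrix.one_mul]
  have woodbury : (P⁻¹ + B * R⁻¹ * Bᵀ)⁻¹ = P + P * B * K := by
    rw [add_mul_mul_inv_eq_sub _ _ _ _ hP.inv.isUnit hR.inv.isUnit
        (by rw [nonsing_inv_nonsing_inv _ hPu, nonsing_inv_nonsing_inv _ hRu]; exact hS.isUnit),
      nonsing_inv_nonsing_inv _ hPu, nonsing_inv_nonsing_inv _ hRu, hK, lqrGain, Matrix.mul_neg,
      sub_eq_add_neg]
    simp only [Matrix.mul_assoc]
  rw [woodbury]
  calc Kᵀ * R * K + (1 + B * K)ᵀ * P * (1 + B * K)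
      = P + P * B * K + Kᵀ * (Bᵀ * P) + Kᵀ * ((R + Bᵀ * P * B) * K) := by
        rw [transpose_add, transpose_one, transpose_mul]
        simp only [Matrix.add_mul, Matrix.mul_add, Matrix.mul_one, Matrix.one_mul,
          Matrix.mul_assoc]
        abel
    _ = P + P * B * K := by rw [hSK, Matrix.mul_neg]; abel

theorem lqrGain_stage_cost {P : Matrix n n ℝ} {R : Matrix m m ℝ} (hP : P.PosDef) (hR : R.PosDef)
    (B : Matrix n m ℝ) (z : n → ℝ) :
    (lqrGain R B P *ᵥ z) ⬝ᵥ (R *ᵥ (lqrGain R B P *ᵥ z))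
      + (z + B *ᵥ (lqrGain R B P *ᵥ z)) ⬝ᵥ (P *ᵥ (z + B *ᵥ (lqrGain R B P *ᵥ z)))
      = z ⬝ᵥ ((P⁻¹ + B * R⁻¹ * Bᵀ)⁻¹ *ᵥ z) := by
  have closedLoop : z + B *ᵥ (lqrGain R B P *ᵥ z) = (1 + B * lqrGain R B P) *ᵥ z := by
    rw [add_mulVec, one_mulVec, mulVec_mulVec]
  rw [closedLoop, ← dotProduct_mulVec_transpose_mul_mul, ← dotProduct_mulVec_transpose_mul_mul,
    ← dotProduct_add, ← add_mulVec, lqrGain_riccati hP hR]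

end LQR

section Consensus

variable {ι n : Type*} [Fintype ι] [DecidableEq ι] [Fintype n]

theorem sum_dotProduct_mulVec_weighted_sum_le (nbr : ι → Finset ι) (ω : ι → ι → ℝ)
    (hω₀ : ∀ i, ∀ j ∈ nbr i, 0 ≤ ω i j) (hω₁ : ∀ i, ∀ j ∈ nbr i, ω i j ≤ 1 / #{l | j ∈ nbr l})
    (S : ι → Matrix n n ℝ) (hS : ∀ i, (S i).PosSemidef) (v : ι → n → ℝ) :
    ∑ i, (∑ j ∈ {j | i ∈ nbr j}, ω j i • v j) ⬝ᵥ (S i *ᵥ ∑ j ∈ {j | i ∈ nbr j}, ω j i • v j)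
      ≤ ∑ j, v j ⬝ᵥ ((∑ i ∈ nbr j, ω j i • S i) *ᵥ v j) :=
  calc _ ≤ ∑ i, ∑ j ∈ {j | i ∈ nbr j}, ω j i * (v j ⬝ᵥ (S i *ᵥ v j)) :=
        sum_le_sum fun i _ => (hS i).dotProduct_mulVec_sum_smul_le
          (fun j hj => hω₀ j i (mem_filter.mp hj).2)
          (sum_le_one_of_le_one_div_card fun j hj => hω₁ j i (mem_filter.mp hj).2) v
    _ = ∑ j, ∑ i ∈ nbr j, ω j i * (v j ⬝ᵥ (S i *ᵥ v j)) := sum_comm' (by simp)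
    _ = _ := by simp only [sum_mulVec, dotProduct_sum, smul_mulVec, dotProduct_smul, smul_eq_mul]

end Consensus

section Network

variable {ι n : Type*} [Fintype n] [DecidableEq n]
  {m : ι → Type*} [∀ i, Fintype (m i)] [∀ i, DecidableEq (m i)]

theorem posDef_sum_smul_inv (nbr : ι → Finset ι) (hself : ∀ i, i ∈ nbr i)
    (ω : ι → ι → ℝ) (hω : ∀ i, ∀ j ∈ nbr i, 0 < ω i j) (P : ι → Matrix n n ℝ)
    (hP : ∀ i, (P i).PosDef) (i : ι) :
    (∑ j ∈ nbr i, ω i j • (P j)⁻¹).PosDef :=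
  posDef_sum ⟨i, hself i⟩ fun j hj => (hP j).inv.smul (hω i j hj)

theorem riccati_step_posDef (nbr : ι → Finset ι) (hself : ∀ i, i ∈ nbr i) (ω : ι → ι → ℝ)
    (hω : ∀ i, ∀ j ∈ nbr i, 0 < ω i j) (A Q : Matrix n n ℝ) (hQ : Q.PosDef)
    (B : ∀ i, Matrix n (m i) ℝ) (R : ∀ i, Matrix (m i) (m i) ℝ) (hR : ∀ i, (R i).PosDef)
    (P Pm Pbar P' : ι → Matrix n n ℝ) (hP' : ∀ i, (P' i).PosDef)
    (hPbar : ∀ i, Pbar i = ((P' i)⁻¹ + B i * (R i)⁻¹ * (B i)ᵀ)⁻¹)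
    (hPm : ∀ i, Pm i = (∑ j ∈ nbr i, ω i j • (Pbar j)⁻¹)⁻¹)
    (hP : ∀ i, P i = Aᵀ * Pm i * A + Q) (i : ι) : (P i).PosDef := by
  have hPbar_pd j : (Pbar j).PosDef :=
    hPbar j ▸ (hP' j).inv_add_mul_inv_mul_transpose_inv (hR j) _
  have hPm_pd : (Pm i).PosDef := hPm i ▸ (posDef_sum_smul_inv nbr hself ω hω _ hPbar_pd i).inv
  exact hP i ▸ PosDef.posSemidef_add
    (by simpa using hPm_pd.posSemidef.conjTranspose_mul_mul_same A) hQ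

variable [Fintype ι] [DecidableEq ι]

theorem relaxed_cost_step_le (nbr : ι → Finset ι) (hself : ∀ i, i ∈ nbr i) (ω : ι → ι → ℝ)
    (hω : ∀ i, ∀ j ∈ nbr i, 0 < ω i j ∧ ω i j ≤ 1 / #{l | j ∈ nbr l})
    (A Q : Matrix n n ℝ) (B : ∀ i, Matrix n (m i) ℝ) (R : ∀ i, Matrix (m i) (m i) ℝ)
    (hR : ∀ i, (R i).PosDef) (P Pm Pbar P' : ι → Matrix n n ℝ) (hP' : ∀ i, (P' i).PosDef)
    (hPbar : ∀ i, Pbar i = ((P' i)⁻¹ + B i * (R i)⁻¹ * (B i)ᵀ)⁻¹)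
    (hPm : ∀ i, Pm i = (∑ j ∈ nbr i, ω i j • (Pbar j)⁻¹)⁻¹)
    (hP : ∀ i, P i = Aᵀ * Pm i * A + Q)
    (x x' : ι → n → ℝ) (u : ∀ i, m i → ℝ)
    (hx' : ∀ i, x' i =
      (∑ j ∈ {j | i ∈ nbr j}, ω j i • ((Pbar i)⁻¹ *ᵥ (Pm j *ᵥ (A *ᵥ x j)))) + B i *ᵥ u i)
    (hu : ∀ i, u i = lqrGain (R i) (B i) (P' i) *ᵥ
      ∑ j ∈ {j | i ∈ nbr j}, ω j i • ((Pbar i)⁻¹ *ᵥ (Pm j *ᵥ (A *ᵥ x j)))) :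
    ∑ i, x i ⬝ᵥ (Q *ᵥ x i) + ∑ i, u i ⬝ᵥ (R i *ᵥ u i) + ∑ i, x' i ⬝ᵥ (P' i *ᵥ x' i)
      ≤ ∑ i, x i ⬝ᵥ (P i *ᵥ x i) := by
  have hPbar_pd i : (Pbar i).PosDef :=
    hPbar i ▸ (hP' i).inv_add_mul_inv_mul_transpose_inv (hR i) _
  have hsum_pd := posDef_sum_smul_inv nbr hself ω (fun i j hj => (hω i j hj).1) Pbar hPbar_pd
  have hPm_inv j : (Pm j)⁻¹ = ∑ i ∈ nbr j, ω j i • (Pbar i)⁻¹ := by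
    rw [hPm j, nonsing_inv_nonsing_inv _ (hsum_pd j).det_pos.ne'.isUnit]
  set v : ι → n → ℝ := fun j => Pm j *ᵥ (A *ᵥ x j)
  set w : ι → n → ℝ := fun i => ∑ j ∈ {j | i ∈ nbr j}, ω j i • v j
  have stage_eq i : u i ⬝ᵥ (R i *ᵥ u i) + x' i ⬝ᵥ (P' i *ᵥ x' i) = w i ⬝ᵥ ((Pbar i)⁻¹ *ᵥ w i) := by
    have hz : ∑ j ∈ {j | i ∈ nbr j}, ω j i • ((Pbar i)⁻¹ *ᵥ (Pm j *ᵥ (A *ᵥ x j)))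
        = (Pbar i)⁻¹ *ᵥ w i := by
      simp only [w, v, mulVec_sum, mulVec_smul]
    rw [hx' i, hu i, hz, lqrGain_stage_cost (hP' i) (hR i), ← hPbar i, mulVec_mulVec,
      mul_nonsing_inv _ (hPbar_pd i).det_pos.ne'.isUnit, one_mulVec, dotProduct_comm]
  have fused_eq j : v j ⬝ᵥ ((Pm j)⁻¹ *ᵥ v j) = x j ⬝ᵥ (P j *ᵥ x j) - x j ⬝ᵥ (Q *ᵥ x j) := by
    have hPm_pd : (Pm j).PosDef := hPm j ▸ (hsum_pd j).inv
    rw [mulVec_mulVec, nonsing_inv_mul _ hPm_pd.det_pos.ne'.isUnit, one_mulVec, dotProduct_comm,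
      ← dotProduct_mulVec_transpose_mul_mul, hP j, add_mulVec, dotProduct_add,
      add_sub_cancel_right]
  calc ∑ i, x i ⬝ᵥ (Q *ᵥ x i) + ∑ i, u i ⬝ᵥ (R i *ᵥ u i) + ∑ i, x' i ⬝ᵥ (P' i *ᵥ x' i)
      = ∑ i, x i ⬝ᵥ (Q *ᵥ x i) + ∑ i, w i ⬝ᵥ ((Pbar i)⁻¹ *ᵥ w i) := by
        rw [add_assoc, ← sum_add_distrib]
        simp only [stage_eq]
    _ ≤ ∑ i, x i ⬝ᵥ (Q *ᵥ x i) + ∑ j, v j ⬝ᵥ ((Pm j)⁻¹ *ᵥ v j) := by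
        simp only [hPm_inv]
        grw [sum_dotProduct_mulVec_weighted_sum_le nbr ω (fun i j hj => (hω i j hj).1.le)
          (fun i j hj => (hω i j hj).2) _ (fun i => (hPbar_pd i).inv.posSemidef) v]
    _ = ∑ i, x i ⬝ᵥ (P i *ᵥ x i) := by
        simp only [fused_eq, sum_sub_distrib]
        abel

end Network

/-- Telescoping bound on the relaxed cost, from the end of the proof of Theorem 2 of
the paper: with the virtual states initialized at `x_{0,i} = x_0/N`, the auxiliary
cost `Ĵ_M = Σ_i (Σ_{k=0}^M x_{k,i}ᵀ (N Q_k) x_{k,i} + Σ_{k=0}^{M−1} u_{k,i}ᵀ R_{k,i} u_{k,i})`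
satisfies `Ĵ_M ≤ Σ_i x_{0,i}ᵀ P̆_{0,i} x_{0,i} = (1/N²) Σ_i x_0ᵀ P̆_{0,i} x_0`. -/
theorem relaxed_cost_telescoping_bound {n N : ℕ} (hN : 0 < N) (m : Fin N → ℕ)
    (nbr : Fin N → Finset (Fin N)) (hself : ∀ i, i ∈ nbr i)
    (ω : Fin N → Fin N → ℝ)
    (hω : ∀ i, ∀ j ∈ nbr i, 0 < ω i j ∧
      ω i j ≤ 1 / ((Finset.univ.filter (fun l => j ∈ nbr l)).card : ℝ))
    (M : ℕ)
    (A : ℕ → Matrix (Fin n) (Fin n) ℝ)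
    (B : ∀ _ : ℕ, ∀ i : Fin N, Matrix (Fin n) (Fin (m i)) ℝ)
    (Q : ℕ → Matrix (Fin n) (Fin n) ℝ) (hQ : ∀ k, (Q k).PosDef)
    (R : ∀ _ : ℕ, ∀ i : Fin N, Matrix (Fin (m i)) (Fin (m i)) ℝ)
    (hR : ∀ k i, (R k i).PosDef)
    (Pbar Pm Pbrv : ℕ → Fin N → Matrix (Fin n) (Fin n) ℝ)
    (hPbrvM : ∀ i, Pbrv M i = (N : ℝ) • Q M)
    (hPbar : ∀ k < M, ∀ i,
      Pbar (k+1) i = ((Pbrv (k+1) i)⁻¹ + B k i * (R k i)⁻¹ * (B k i)ᵀ)⁻¹)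
    (hPm : ∀ k < M, ∀ i, Pm (k+1) i = (∑ j ∈ nbr i, ω i j • (Pbar (k+1) j)⁻¹)⁻¹)
    (hPbrv : ∀ k < M, ∀ i, Pbrv k i = (A k)ᵀ * Pm (k+1) i * A k + (N : ℝ) • Q k)
    (xv : ℕ → Fin N → Fin n → ℝ)
    (u : ∀ _ : ℕ, ∀ i : Fin N, Fin (m i) → ℝ)
    (hxv : ∀ k < M, ∀ i, xv (k+1) i =
      (∑ j ∈ Finset.univ.filter (fun j => i ∈ nbr j),
        ω j i • ((Pbar (k+1) i)⁻¹ *ᵥ (Pm (k+1) j *ᵥ (A k *ᵥ xv k j))))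
      + B k i *ᵥ u k i)
    (hu : ∀ k < M, ∀ i, u k i =
      (-((R k i + (B k i)ᵀ * Pbrv (k+1) i * B k i)⁻¹ * ((B k i)ᵀ * Pbrv (k+1) i))) *ᵥ
      (∑ j ∈ Finset.univ.filter (fun j => i ∈ nbr j),
        ω j i • ((Pbar (k+1) i)⁻¹ *ᵥ (Pm (k+1) j *ᵥ (A k *ᵥ xv k j)))))
    (x0 : Fin n → ℝ) (hxv0 : ∀ i, xv 0 i = (N : ℝ)⁻¹ • x0) :
    (∑ i, (∑ k ∈ Finset.range (M+1), xv k i ⬝ᵥ (((N : ℝ) • Q k) *ᵥ xv k i)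
        + ∑ k ∈ Finset.range M, u k i ⬝ᵥ (R k i *ᵥ u k i)))
      ≤ ∑ i, xv 0 i ⬝ᵥ (Pbrv 0 i *ᵥ xv 0 i) ∧
    (∑ i, xv 0 i ⬝ᵥ (Pbrv 0 i *ᵥ xv 0 i))
      = (1 / (N : ℝ) ^ 2) * ∑ i, x0 ⬝ᵥ (Pbrv 0 i *ᵥ x0) := by
  have hNpos : (0 : ℝ) < N := Nat.cast_pos.mpr hN
  have hPbrv_pd : ∀ k ≤ M, ∀ i, (Pbrv k i).PosDef := by
    intro k hk
    induction hk using Nat.decreasingInduction with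
    | self => exact fun i => hPbrvM i ▸ (hQ M).smul hNpos
    | of_succ k hk ih =>
      exact riccati_step_posDef nbr hself ω (fun i j hj => (hω i j hj).1) (A k) _
        ((hQ k).smul hNpos) (B k) (R k) (hR k) _ _ _ _ ih (hPbar k hk) (hPm k hk) (hPbrv k hk)
  have step k (hk : k < M) := relaxed_cost_step_le nbr hself ω hω (A k) ((N : ℝ) • Q k) (B k)
    (R k) (hR k) (Pbrv k) (Pm (k + 1)) (Pbar (k + 1)) (Pbrv (k + 1)) (hPbrv_pd (k + 1) hk)
    (hPbar k hk) (hPm k hk) (hPbrv k hk) (xv k) (xv (k + 1)) (u k) (hxv k hk) (hu k hk)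
  constructor
  · calc _ = ∑ k ∈ range M, (∑ i, xv k i ⬝ᵥ (((N : ℝ) • Q k) *ᵥ xv k i)
            + ∑ i, u k i ⬝ᵥ (R k i *ᵥ u k i)) + ∑ i, xv M i ⬝ᵥ (Pbrv M i *ᵥ xv M i) := by
          simp only [hPbrvM, sum_add_distrib, sum_range_succ _ M]
          rw [sum_comm (s := univ), sum_comm (s := univ)]
          ring
      _ ≤ _ := sum_range_add_le_of_add_le (V := fun k => ∑ i, xv k i ⬝ᵥ (Pbrv k i *ᵥ xv k i)) step
  · simp only [hxv0, mulVec_smul, dotProduct_smul, smul_dotProduct, smul_eq_mul, mul_sum]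
    refine sum_congr rfl fun i _ => ?_
    ring
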